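/- arXiv:1712.09318 — 2 statements merged into one kernel-verified Lean document; each statement's English description precedes it below -/
import Mathlib

section
/- Let {f_t : t ∈ T} be an arbitrary family of functions f_t : ℝⁿ → ℝ̄ with pointwise supremum f. If f* is proper and f** = sup_{t∈T} f_t**, then f* = c̄o( inf_{t∈T} f_t* ), the closed convex hull of the pointwise infimum of the conjugates. -/
set_option maxHeartbeats 1000000


open scoped RealInnerProductSpace Pointwise
open Set Filter

noncomputable section

/-- `En n` is the Euclidean space `ℝⁿ`. -/
abbrev En (n : ℕ) := EuclideanSpace ℝ (Fin n)

/-- The epigraph of an extended-real-valued function. -/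
def epiS {n : ℕ} (g : En n → EReal) : Set (En n × ℝ) := {p | g p.1 ≤ (p.2 : EReal)}

/-- The Fenchel conjugate `g*`. -/
def conjF {n : ℕ} (g : En n → EReal) (y : En n) : EReal :=
  ⨆ x, (⟪y, x⟫ : EReal) - g x

/-- The effective domain of `g`. -/
def dm {n : ℕ} (g : En n → EReal) : Set (En n) := {x | g x < ⊤}

/-- `g` is proper: never `-∞` and not identically `+∞`. -/
def ProperF {n : ℕ} (g : En n → EReal) : Prop := (∃ x, g x < ⊤) ∧ ∀ x, ⊥ < g x

/-- The ε-subdifferential `∂_ε g(x)` (empty when `g x` is not finite). -/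
def eSub {n : ℕ} (g : En n → EReal) (ε : ℝ) (x : En n) : Set (En n) :=
  {y | ∃ r : ℝ, g x = (r : EReal) ∧ ∀ z, ((⟪y, z - x⟫ + r - ε : ℝ) : EReal) ≤ g z}

/-- The indicator function `δ_A` (0 on `A`, `+∞` outside). -/
def indE {n : ℕ} (A : Set (En n)) (x : En n) : EReal :=
  Set.indicator Aᶜ (fun _ => (⊤ : EReal)) x

/-- The ε-normal set `N^ε_A(x) = ∂_ε δ_A(x)`. -/
def eNormal {n : ℕ} (A : Set (En n)) (ε : ℝ) (x : En n) : Set (En n) :=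
  eSub (indE A) ε x

/-- `Γ₀`: proper, lower semicontinuous, convex. -/
def Gamma0 {n : ℕ} (g : En n → EReal) : Prop :=
  ProperF g ∧ LowerSemicontinuous g ∧ Convex ℝ (epiS g)

/-- Epi-pointed: `g*` is proper with nonempty interior of its domain. -/
def EpiPointed {n : ℕ} (g : En n → EReal) : Prop :=
  ProperF (conjF g) ∧ (interior (dm (conjF g))).Nonempty

/-- The closed convex hull `c̄o g`: the function whose epigraph is the closed
convex hull of `epi g`. -/
def cchF {n : ℕ} (g : En n → EReal) (x : En n) : EReal :=
  sInf ((fun r : ℝ => (r : EReal)) '' {r | (x, r) ∈ closure (convexHull ℝ (epiS g))})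

/-- The convex hull `co g`: the function whose epigraph is the convex hull of `epi g`. -/
def coF {n : ℕ} (g : En n → EReal) (x : En n) : EReal :=
  sInf ((fun r : ℝ => (r : EReal)) '' {r | (x, r) ∈ convexHull ℝ (epiS g)})

/-- Membership in the generalized simplex `Δ(T)`. -/
def inSimplex {T : Type*} (l : T →₀ ℝ) : Prop :=
  (∀ t, 0 ≤ l t ∧ l t ≤ 1) ∧ (∑ t ∈ l.support, l t) = 1

/-- Membership in `Δ^ε(T)`. -/
def inDelta {T : Type*} (ε : ℝ) (e : T →₀ ℝ) : Prop :=
  (∀ t, 0 ≤ e t ∧ e t ≤ ε) ∧ (∑ t ∈ e.support, e t) = ε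

end

section helpers
variable {n : ℕ}

lemma mem_epiS {g : En n → EReal} {z : En n} {μ : ℝ} :
    (z, μ) ∈ epiS g ↔ g z ≤ (μ : EReal) := Iff.rfl

lemma conjF_antitone {h k : En n → EReal} (hk : ∀ x, h x ≤ k x) (y : En n) :
    conjF k y ≤ conjF h y :=
  iSup_mono fun x => EReal.sub_le_sub le_rfl (hk x)

lemma le_conjF (h : En n → EReal) (x y : En n) :
    (⟪y, x⟫ : EReal) - h x ≤ conjF h y :=
  le_iSup (fun x => (⟪y, x⟫ : EReal) - h x) x

lemma biconjF_le (h : En n → EReal) (x : En n) : conjF (conjF h) x ≤ h x := by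
  apply iSup_le; intro y
  have hy : ((⟪y, x⟫ : ℝ) : EReal) - h x ≤ conjF h y := le_conjF h x y
  set v := h x with hhx
  clear_value v
  induction v using EReal.rec with
  | top => exact le_top
  | bot =>
    rw [EReal.coe_sub_bot] at hy
    rw [top_le_iff.mp hy]
    simp
  | coe r =>
    rw [← EReal.coe_sub] at hy
    calc (⟪x, y⟫ : EReal) - conjF h y ≤ (⟪x, y⟫ : EReal) - ((⟪y, x⟫ - r : ℝ) : EReal) :=
          EReal.sub_le_sub le_rfl hy
      _ = ((⟪x, y⟫ - (⟪y, x⟫ - r) : ℝ) : EReal) := by norm_cast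
      _ = (r : EReal) := by rw [real_inner_comm]; norm_num

lemma conjF_triple (h : En n → EReal) (y : En n) :
    conjF (conjF (conjF h)) y = conjF h y :=
  le_antisymm (biconjF_le (conjF h) y) (conjF_antitone (biconjF_le h) y)

end helpers

section helpers2
variable {n : ℕ}

lemma conjF_le_of_bound {h : En n → EReal} {w : En n} {b : ℝ}
    (hbot : ∀ z, (⊥ : EReal) < h z)
    (hb : ∀ z (μ : ℝ), h z ≤ (μ : EReal) → ⟪w, z⟫ - μ ≤ b) :
    conjF h w ≤ (b : EReal) := by
  apply iSup_le; intro z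
  have hbz := hbot z
  have hbz' := hb z
  set v := h z with hv
  clear_value v
  induction v using EReal.rec with
  | bot => exact absurd hbz (lt_irrefl _)
  | top => simp
  | coe μ =>
    have := hbz' μ le_rfl
    rw [← EReal.coe_sub]
    exact_mod_cast this

lemma conjF_iInf {T : Type*} [Nonempty T] (h : T → En n → EReal) (y : En n) :
    conjF (fun z => ⨅ t, h t z) y = ⨆ t, conjF (h t) y := by
  apply le_antisymm
  · apply iSup_le; intro z
    by_contra hc
    push_neg at hc
    set a : ℝ := ⟪y, z⟫ with ha
    obtain ⟨r, hr1, hr2⟩ := EReal.exists_between_coe_real hc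
    have hlt : (⨅ t, h t z) < ((a - r : ℝ) : EReal) := by
      set v := ⨅ t, h t z with hv
      clear_value v
      induction v using EReal.rec with
      | bot => exact bot_lt_iff_ne_bot.mpr (EReal.coe_ne_bot _)
      | top => simp at hr2
      | coe bb =>
        rw [← EReal.coe_sub] at hr2
        have : r < a - bb := by exact_mod_cast hr2
        exact_mod_cast (by linarith : bb < a - r)
    obtain ⟨t, ht⟩ := iInf_lt_iff.mp hlt
    have h1 : (r : EReal) ≤ (a : EReal) - ((a - r : ℝ) : EReal) := by
      rw [← EReal.coe_sub]; exact_mod_cast (by linarith : r ≤ a - (a - r))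
    have h2 : (a : EReal) - ((a - r : ℝ) : EReal) ≤ (a : EReal) - h t z :=
      EReal.sub_le_sub le_rfl ht.le
    have h3 : (a : EReal) - h t z ≤ conjF (h t) y := le_conjF (h t) z y
    have h4 : conjF (h t) y ≤ ⨆ t, conjF (h t) y := le_iSup (fun t => conjF (h t) y) t
    have := (h1.trans h2).trans (h3.trans h4)
    exact absurd hr1 (not_lt.mpr this)
  · exact iSup_le fun t => conjF_antitone (fun x => iInf_le (fun t => h t x) t) y

lemma epiS_conjF_eq (h : En n → EReal) :
    epiS (conjF h) = ⋂ x, {p : En n × ℝ | (⟪p.1, x⟫ : EReal) - h x ≤ (p.2 : EReal)} := by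
  ext p
  simp only [epiS, conjF, mem_setOf_eq, iSup_le_iff, mem_iInter]

lemma isClosed_epiS_conjF (h : En n → EReal) : IsClosed (epiS (conjF h)) := by
  rw [epiS_conjF_eq]
  apply isClosed_iInter
  intro x
  set v := h x with hv
  clear_value v
  induction v using EReal.rec with
  | bot =>
    convert isClosed_empty
    ext p
    simp [EReal.coe_sub_bot]
  | top =>
    convert isClosed_univ
    ext p
    simp [EReal.sub_top]
  | coe r =>
    have : {p : En n × ℝ | (⟪p.1, x⟫ : EReal) - (r : EReal) ≤ (p.2 : EReal)}
        = {p : En n × ℝ | ⟪p.1, x⟫ - r ≤ p.2} := by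
      ext p; rw [mem_setOf_eq, mem_setOf_eq, ← EReal.coe_sub, EReal.coe_le_coe_iff]
    rw [this]
    exact isClosed_le ((continuous_fst.inner continuous_const).sub continuous_const) continuous_snd

lemma convex_epiS_conjF (h : En n → EReal) : Convex ℝ (epiS (conjF h)) := by
  rw [epiS_conjF_eq]
  apply convex_iInter
  intro x
  set v := h x with hv
  clear_value v
  induction v using EReal.rec with
  | bot =>
    convert convex_empty
    ext p
    simp [EReal.coe_sub_bot]
  | top =>
    convert convex_univ
    ext p
    simp [EReal.sub_top]
  | coe r =>
    have : {p : En n × ℝ | (⟪p.1, x⟫ : EReal) - (r : EReal) ≤ (p.2 : EReal)}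
        = {p : En n × ℝ | ⟪p.1, x⟫ - p.2 ≤ r} := by
      ext p
      rw [mem_setOf_eq, mem_setOf_eq, ← EReal.coe_sub, EReal.coe_le_coe_iff]
      constructor <;> intro <;> linarith
    rw [this]
    refine convex_halfSpace_le ⟨fun a b => ?_, fun c a => ?_⟩ r
    · simp only [Prod.fst_add, Prod.snd_add, inner_add_left]; ring
    · simp only [Prod.smul_fst, Prod.smul_snd, smul_eq_mul, real_inner_smul_left]; ring

end helpers2


section sepHelpers
variable {n : ℕ}

lemma exists_real_of_ne {v : EReal} (h1 : v ≠ ⊥) (h2 : v ≠ ⊤) : ∃ r : ℝ, v = (r : EReal) := by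
  induction v using EReal.rec with
  | bot => exact absurd rfl h1
  | top => exact absurd rfl h2
  | coe r => exact ⟨r, rfl⟩

lemma scale_ineq {β u c μ : ℝ} (hβ : β < 0) (h : c + μ * β < u) :
    (-β)⁻¹ * c - μ ≤ u / (-β) := by
  have hB : 0 < -β := by linarith
  rw [le_div_iff₀ hB]
  have h2 : ((-β)⁻¹ * c - μ) * (-β) = c * ((-β)⁻¹ * (-β)) - μ * (-β) := by ring
  rw [h2, inv_mul_cancel₀ (ne_of_gt hB), mul_one]
  linarith

lemma scale_ineq2 {β u c s : ℝ} (hβ : β < 0) (h : u < c + s * β) :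
    s < (-β)⁻¹ * c - u / (-β) := by
  have hB : 0 < -β := by linarith
  have key : u / (-β) < (-β)⁻¹ * c - s := by
    rw [div_lt_iff₀ hB]
    have h2 : ((-β)⁻¹ * c - s) * (-β) = c * ((-β)⁻¹ * (-β)) - s * (-β) := by ring
    rw [h2, inv_mul_cancel₀ (ne_of_gt hB), mul_one]
    linarith
  linarith

lemma sep_point {D : Set (En n × ℝ)} (hconv : Convex ℝ D) (hclosed : IsClosed D)
    {p : En n × ℝ} (hp : p ∉ D) :
    ∃ (x₀ : En n) (β u : ℝ), (∀ q ∈ D, ⟪x₀, q.1⟫ + q.2 * β < u) ∧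
      u < ⟪x₀, p.1⟫ + p.2 * β := by
  obtain ⟨φ, u, hD, hpu⟩ := geometric_hahn_banach_closed_point hconv hclosed hp
  set ψ : En n →L[ℝ] ℝ := φ.comp (ContinuousLinearMap.inl ℝ (En n) ℝ) with hψ
  set x₀ := (InnerProductSpace.toDual ℝ (En n)).symm ψ with hx₀
  set β := φ ((0 : En n), (1 : ℝ)) with hβ
  have hdec : ∀ q : En n × ℝ, φ q = ⟪x₀, q.1⟫ + q.2 * β := by
    intro q
    have h1 : ⟪x₀, q.1⟫ = ψ q.1 := by
      rw [hx₀]; exact InnerProductSpace.toDual_symm_apply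
    have h2 : q = (q.1, (0 : ℝ)) + q.2 • ((0 : En n), (1 : ℝ)) := by
      ext <;> simp
    calc φ q = φ ((q.1, (0:ℝ)) + q.2 • ((0 : En n), (1:ℝ))) := by rw [← h2]
      _ = φ (q.1, (0:ℝ)) + q.2 * φ ((0 : En n), (1:ℝ)) := by
          rw [map_add, map_smul]; rfl
      _ = ⟪x₀, q.1⟫ + q.2 * β := by rw [h1, hβ]; rfl
  exact ⟨x₀, β, u, fun q hq => hdec q ▸ hD q hq, hdec p ▸ hpu⟩

lemma beta_nonpos {g : En n → EReal} {x₀ : En n} {β u : ℝ} {D : Set (En n × ℝ)}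
    (hsub : epiS g ⊆ D) (hne : (epiS g).Nonempty)
    (hD : ∀ q ∈ D, ⟪x₀, q.1⟫ + q.2 * β < u) : β ≤ 0 := by
  by_contra hc
  push_neg at hc
  obtain ⟨⟨z₀, μ₀⟩, hz₀⟩ := hne
  set k : ℝ := max 0 ((u - ⟪x₀, z₀⟫ - μ₀ * β) / β + 1) with hk
  have hk0 : (0:ℝ) ≤ k := le_max_left _ _
  have hmem : ((z₀, μ₀ + k) : En n × ℝ) ∈ epiS g := by
    rw [mem_epiS]
    refine le_trans (mem_epiS.mp hz₀) ?_
    exact_mod_cast (by linarith : μ₀ ≤ μ₀ + k)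
  have hlt := hD _ (hsub hmem)
  have hk1 : (u - ⟪x₀, z₀⟫ - μ₀ * β) / β + 1 ≤ k := le_max_right _ _
  have hkey : (u - ⟪x₀, z₀⟫ - μ₀ * β) + β ≤ k * β := by
    have h3 := mul_le_mul_of_nonneg_right hk1 hc.le
    rw [add_mul, div_mul_cancel₀ _ (ne_of_gt hc), one_mul] at h3
    linarith
  simp only at hlt
  nlinarith

lemma exists_conj_bound (h : En n → EReal) (hbot : ∀ z, (⊥ : EReal) < conjF h z)
    {y₀ : En n} {a₀ : ℝ} (hy₀ : conjF h y₀ = (a₀ : EReal)) :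
    ∃ (w₀ : En n) (b₀ : ℝ), conjF (conjF h) w₀ ≤ (b₀ : EReal) := by
  have hpt : ((y₀, a₀ - 1) : En n × ℝ) ∉ epiS (conjF h) := by
    rw [mem_epiS, hy₀, EReal.coe_le_coe_iff]
    exact not_le.mpr (by linarith)
  obtain ⟨x₀, β, u, hD, hpu⟩ := sep_point (convex_epiS_conjF h) (isClosed_epiS_conjF h) hpt
  have hmem₀ : ((y₀, a₀) : En n × ℝ) ∈ epiS (conjF h) := mem_epiS.mpr (le_of_eq hy₀)
  have hβ : β ≤ 0 := beta_nonpos (subset_refl _) ⟨_, hmem₀⟩ hD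
  rcases hβ.lt_or_eq with hβlt | hβ0
  · refine ⟨(-β)⁻¹ • x₀, u / (-β), conjF_le_of_bound hbot ?_⟩
    intro z μ hzμ
    have h1 : ⟪x₀, z⟫ + μ * β < u := hD (z, μ) (mem_epiS.mpr hzμ)
    rw [real_inner_smul_left]
    exact scale_ineq hβlt h1
  · exfalso
    have h1 := hD (y₀, a₀) hmem₀
    subst hβ0
    simp only at h1 hpu
    rw [mul_zero] at h1 hpu
    linarith

end sepHelpers

/-- If `f*` is proper and `f** = sup_t f_t**`, then
`f* = c̄o (inf_t f_t*)`. -/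
theorem statement2 {n : ℕ} {T : Type*} (f : T → En n → EReal)
    (hp : ProperF (conjF (fun x => ⨆ t, f t x)))
    (hbi : ∀ x, conjF (conjF (fun x => ⨆ t, f t x)) x = ⨆ t, conjF (conjF (f t)) x) :
    ∀ y, conjF (fun x => ⨆ t, f t x) y = cchF (fun z => ⨅ t, conjF (f t) z) y := by
  intro y
  have hT : Nonempty T := by
    by_contra hT
    rw [not_nonempty_iff] at hT
    obtain ⟨x₁, hx₁⟩ := hp.1
    have hFbot : (⨆ t, f t (0 : En n)) = (⊥ : EReal) := iSup_of_empty _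
    have h0 := le_conjF (fun x => ⨆ t, f t x) 0 x₁
    rw [hFbot, EReal.coe_sub_bot] at h0
    rw [top_le_iff.mp h0] at hx₁
    exact absurd hx₁ (lt_irrefl _)
  set F : En n → EReal := fun x => ⨆ t, f t x with hF
  set g : En n → EReal := fun z => ⨅ t, conjF (f t) z with hg
  obtain ⟨⟨y₁, hy₁⟩, hbot⟩ := hp
  obtain ⟨a₀, hy₀⟩ : ∃ a₀ : ℝ, conjF F y₁ = (a₀ : EReal) :=
    exists_real_of_ne (ne_of_gt (hbot y₁)) (ne_of_lt hy₁)
  have hgstar : ∀ w, conjF g w = conjF (conjF F) w := by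
    intro w
    rw [hg, conjF_iInf (fun t => conjF (f t)) w]
    exact (hbi w).symm
  have hgg : ∀ x, conjF (conjF g) x = conjF F x := by
    intro x
    have heq : conjF g = conjF (conjF F) := funext hgstar
    rw [show conjF (conjF g) x = conjF (conjF (conjF F)) x from by rw [heq], conjF_triple]
  have hFsg : ∀ z, conjF F z ≤ g z :=
    fun z => le_iInf fun t => conjF_antitone (fun x => le_iSup (fun t => f t x) t) z
  have hepiC : epiS g ⊆ closure (convexHull ℝ (epiS g)) :=
    fun p hp' => subset_closure (subset_convexHull ℝ _ hp')
  have hCsub : closure (convexHull ℝ (epiS g)) ⊆ epiS (conjF F) := by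
    apply closure_minimal _ (isClosed_epiS_conjF F)
    apply convexHull_min _ (convex_epiS_conjF F)
    intro p hp'
    have h1 : g p.1 ≤ (p.2 : EReal) := hp'
    exact le_trans (hFsg p.1) h1
  have step1 : conjF F y ≤ cchF g y := by
    rw [cchF]
    apply le_sInf
    rintro b ⟨r, hr, rfl⟩
    exact mem_epiS.mp (hCsub hr)
  obtain ⟨w₀, b₀, hw₀⟩ := exists_conj_bound F hbot hy₀
  have hgbot : ∀ z, (⊥ : EReal) < g z := fun z => lt_of_lt_of_le (hbot z) (hFsg z)
  have hdom : (epiS g).Nonempty := by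
    by_contra hne
    rw [Set.not_nonempty_iff_eq_empty] at hne
    have hgtop : ∀ z, g z = ⊤ := by
      intro z
      by_contra hz
      obtain ⟨r, hr⟩ := exists_real_of_ne (ne_of_gt (hgbot z)) hz
      have hmem : ((z, r) : En n × ℝ) ∈ epiS g := mem_epiS.mpr (le_of_eq hr)
      rw [hne] at hmem
      exact hmem
    have h1 : ((⟪w₀, y₁⟫ : ℝ) : EReal) - conjF F y₁ ≤ conjF (conjF F) w₀ :=
      le_conjF (conjF F) y₁ w₀
    rw [hy₀, ← EReal.coe_sub, ← hgstar w₀] at h1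
    have h2 : conjF g w₀ = ⊥ := by
      rw [conjF]
      simp [hgtop]
    rw [h2] at h1
    exact EReal.coe_ne_bot _ (le_bot_iff.mp h1)
  have step2 : cchF g y ≤ conjF F y := by
    set v := conjF F y with hvy
    clear_value v
    induction v using EReal.rec with
    | top => exact le_top
    | bot =>
      exfalso
      have := hbot y
      rw [← hvy] at this
      exact absurd this (lt_irrefl _)
    | coe a =>
      by_contra hc
      push_neg at hc
      obtain ⟨s, hs1, hs2⟩ := EReal.exists_between_coe_real hc
      have has : a < s := by exact_mod_cast hs1
      have hys : ((y, s) : En n × ℝ) ∉ closure (convexHull ℝ (epiS g)) := by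
        intro hmem
        have hle : cchF g y ≤ (s : EReal) := by
          rw [cchF]; exact sInf_le ⟨s, hmem, rfl⟩
        exact absurd hle (not_le.mpr hs2)
      obtain ⟨x₀, β, u, hD, hpu⟩ :=
        sep_point ((convex_convexHull ℝ _).closure) isClosed_closure hys
      have hβ : β ≤ 0 := beta_nonpos hepiC hdom hD
      rcases hβ.lt_or_eq with hβlt | hβ0
      · have hbnd : ∀ z (μ : ℝ), g z ≤ (μ : EReal) →
            ⟪(-β)⁻¹ • x₀, z⟫ - μ ≤ u / (-β) := by
          intro z μ hzμ
          have h1 : ⟪x₀, z⟫ + μ * β < u := hD (z, μ) (hepiC (mem_epiS.mpr hzμ))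
          rw [real_inner_smul_left]
          exact scale_ineq hβlt h1
        have hgw : conjF g ((-β)⁻¹ • x₀) ≤ ((u / (-β) : ℝ) : EReal) :=
          conjF_le_of_bound hgbot hbnd
        have h3 : s < (-β)⁻¹ * ⟪x₀, y⟫ - u / (-β) := scale_ineq2 hβlt hpu
        have h4 : ((⟪y, (-β)⁻¹ • x₀⟫ : ℝ) : EReal) - conjF g ((-β)⁻¹ • x₀) ≤
            conjF (conjF g) y := le_conjF (conjF g) ((-β)⁻¹ • x₀) y
        have h5 : ((⟪y, (-β)⁻¹ • x₀⟫ - u / (-β) : ℝ) : EReal) ≤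
            ((⟪y, (-β)⁻¹ • x₀⟫ : ℝ) : EReal) - conjF g ((-β)⁻¹ • x₀) := by
          rw [EReal.coe_sub]
          exact EReal.sub_le_sub le_rfl hgw
        have h6 : conjF (conjF g) y = (a : EReal) := by rw [hgg y, ← hvy]
        have h7 : ⟪y, (-β)⁻¹ • x₀⟫ - u / (-β) ≤ a := by
          have := (h5.trans h4).trans_eq h6
          exact_mod_cast this
        have h8 : ⟪y, (-β)⁻¹ • x₀⟫ = (-β)⁻¹ * ⟪x₀, y⟫ := by
          rw [real_inner_smul_right, real_inner_comm]
        rw [h8] at h7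
        linarith
      · subst hβ0
        have hu : u < ⟪x₀, y⟫ := by
          rw [mul_zero, add_zero] at hpu
          exact hpu
        set ρ : ℝ := max 0 ((a - ⟪w₀, y⟫ + b₀ + 1) / (⟪x₀, y⟫ - u)) with hρ
        have hd : 0 < ⟪x₀, y⟫ - u := by linarith
        have hρ0 : (0:ℝ) ≤ ρ := le_max_left _ _
        have hρd : a - ⟪w₀, y⟫ + b₀ + 1 ≤ ρ * (⟪x₀, y⟫ - u) := by
          have h1 : (a - ⟪w₀, y⟫ + b₀ + 1) / (⟪x₀, y⟫ - u) ≤ ρ := le_max_right _ _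
          have h2 := mul_le_mul_of_nonneg_right h1 hd.le
          rwa [div_mul_cancel₀ _ (ne_of_gt hd)] at h2
        have hgw₀ : conjF g w₀ ≤ (b₀ : EReal) := by rw [hgstar w₀]; exact hw₀
        have hbnd : ∀ z (μ : ℝ), g z ≤ (μ : EReal) →
            ⟪w₀ + ρ • x₀, z⟫ - μ ≤ b₀ + ρ * u := by
          intro z μ hzμ
          have h1 : ⟪x₀, z⟫ + μ * 0 < u := hD (z, μ) (hepiC (mem_epiS.mpr hzμ))
          rw [mul_zero, add_zero] at h1
          have h2 : ((⟪w₀, z⟫ - μ : ℝ) : EReal) ≤ (b₀ : EReal) := by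
            calc ((⟪w₀, z⟫ - μ : ℝ) : EReal)
                = ((⟪w₀, z⟫ : ℝ) : EReal) - (μ : EReal) := by rw [EReal.coe_sub]
              _ ≤ ((⟪w₀, z⟫ : ℝ) : EReal) - g z := EReal.sub_le_sub le_rfl hzμ
              _ ≤ conjF g w₀ := le_conjF g z w₀
              _ ≤ (b₀ : EReal) := hgw₀
          have h2' : ⟪w₀, z⟫ - μ ≤ b₀ := by exact_mod_cast h2
          rw [inner_add_left, real_inner_smul_left]
          nlinarith [mul_le_mul_of_nonneg_left h1.le hρ0]
        have hgw : conjF g (w₀ + ρ • x₀) ≤ ((b₀ + ρ * u : ℝ) : EReal) :=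
          conjF_le_of_bound hgbot hbnd
        have h4 : ((⟪y, w₀ + ρ • x₀⟫ : ℝ) : EReal) - conjF g (w₀ + ρ • x₀) ≤
            conjF (conjF g) y := le_conjF (conjF g) (w₀ + ρ • x₀) y
        have h5 : ((⟪y, w₀ + ρ • x₀⟫ - (b₀ + ρ * u) : ℝ) : EReal) ≤
            ((⟪y, w₀ + ρ • x₀⟫ : ℝ) : EReal) - conjF g (w₀ + ρ • x₀) := by
          rw [EReal.coe_sub]
          exact EReal.sub_le_sub le_rfl hgw
        have h6 : conjF (conjF g) y = (a : EReal) := by rw [hgg y, ← hvy]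
        have h7 : ⟪y, w₀ + ρ • x₀⟫ - (b₀ + ρ * u) ≤ a := by
          have := (h5.trans h4).trans_eq h6
          exact_mod_cast this
        have h8 : ⟪y, w₀ + ρ • x₀⟫ = ⟪w₀, y⟫ + ρ * ⟪x₀, y⟫ := by
          rw [inner_add_right, real_inner_smul_right, real_inner_comm y w₀,
            real_inner_comm y x₀]
        rw [h8] at h7
        rw [mul_sub] at hρd
        linarith
  exact le_antisymm step1 step2
end

section
/- Let {f_t : t ∈ T} be an increasing family of epi-pointed functions on ℝⁿ with pointwise supremum f, such that f* is proper and f** = sup_{t∈T} f_t**. Then for every y ∈ int(dom f*): f*(y) = inf_{t∈T} f_t*(y). -/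
open scoped RealInnerProductSpace Pointwise
open Set Filter

/-!
The inequality `f* ≤ inf_t f_t*` is immediate. For the converse fix a real `β` below every
`f_t*(y)`. The domains `dom f_t*` increase to a convex set `U`. Since `f** = sup_t f_t**` grows at
most linearly along any direction separating a point from `U`, the function `f* = f***` is `+∞`
off `closure U`, so `y ∈ int (closure U) = int U`. Then finitely many points `y ± δ eᵢ` lie in a
single `dom f_{t₀}*`, which makes the closed set `{x | β ≤ ⟪y, x⟫ - f_{t₀}**(x)}` bounded. These
sets decrease in `t` and are nonempty because `f_t*** = f_t*`, so by compactness they share a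
point `x`, and `f*(y) ≥ ⟪y, x⟫ - sup_t f_t**(x) ≥ β`.
-/

namespace EReal

lemma coe_le_coe_sub_iff (β a : ℝ) (b : EReal) :
    (β : EReal) ≤ (a : EReal) - b ↔ b ≤ ((a - β : ℝ) : EReal) := by
  induction b using EReal.rec with
  | bot => simp
  | coe r => norm_cast; constructor <;> intro h <;> linarith
  | top => simp [EReal.sub_top, -EReal.coe_sub]

lemma coe_sub_le_coe_iff (a c : ℝ) (b : EReal) :
    (a : EReal) - b ≤ (c : EReal) ↔ ((a - c : ℝ) : EReal) ≤ b := by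
  induction b using EReal.rec with
  | bot => simp [-EReal.coe_sub]
  | coe r => norm_cast; constructor <;> intro h <;> linarith
  | top => simp [EReal.sub_top]

lemma coe_add_sub (a r : ℝ) (b : EReal) :
    ((a + r : ℝ) : EReal) - b = ((a : EReal) - b) + r := by
  induction b using EReal.rec with
  | bot => simp
  | coe s => norm_cast; ring
  | top => simp [EReal.sub_top]

lemma sub_le_sub_of_le_sub_of_sub_le {a b β M : ℝ} {e : EReal}
    (ha : (β : EReal) ≤ a - e) (hb : (b : EReal) - e ≤ M) : b - a ≤ M - β := by
  induction e using EReal.rec with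
  | bot => simp at hb
  | coe s => norm_cast at ha hb; linarith
  | top => simp [EReal.sub_top] at ha

end EReal

section Conjugate

variable {n : ℕ}

lemma inner_sub_le_conjF (g : En n → EReal) (y x : En n) :
    (⟪y, x⟫ : EReal) - g x ≤ conjF g y :=
  le_iSup (fun x => (⟪y, x⟫ : EReal) - g x) x

lemma conjF_anti {g₁ g₂ : En n → EReal} (h : ∀ x, g₁ x ≤ g₂ x) (y : En n) :
    conjF g₂ y ≤ conjF g₁ y :=
  iSup_mono fun x => EReal.sub_le_sub le_rfl (h x)

lemma conjF_conjF_le (g : En n → EReal) (x : En n) : conjF (conjF g) x ≤ g x := by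
  refine iSup_le fun y => ?_
  induction hgx : g x using EReal.rec with
  | bot =>
    have h := inner_sub_le_conjF g y x
    rw [hgx, EReal.coe_sub_bot, top_le_iff] at h
    simp [h, EReal.sub_top]
  | coe r =>
    rw [EReal.coe_sub_le_coe_iff, real_inner_comm]
    simpa [hgx] using inner_sub_le_conjF g y x
  | top => exact le_top

lemma conjF_conjF_conjF (g : En n → EReal) (y : En n) :
    conjF (conjF (conjF g)) y = conjF g y :=
  le_antisymm (conjF_conjF_le (conjF g) y) (conjF_anti (conjF_conjF_le g) y)

lemma exists_conjF_conjF_ne_top {g : En n → EReal} {y : En n} (hy : conjF g y ≠ ⊥) :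
    ∃ x, conjF (conjF g) x ≠ ⊤ := by
  by_contra! h
  refine hy ?_
  rw [← conjF_conjF_conjF, conjF]
  simp [h, EReal.sub_top]

lemma isClosed_setOf_le_inner_sub_conjF (φ : En n → EReal) (y : En n) (β : ℝ) :
    IsClosed {x : En n | (β : EReal) ≤ (⟪y, x⟫ : EReal) - conjF φ x} := by
  have hset : {x : En n | (β : EReal) ≤ (⟪y, x⟫ : EReal) - conjF φ x} =
      ⋂ z, {x : En n | ((⟪x, z⟫ - (⟪y, x⟫ - β) : ℝ) : EReal) ≤ φ z} := by
    ext x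
    simp only [mem_ofPred_eq, mem_iInter, EReal.coe_le_coe_sub_iff, conjF, iSup_le_iff,
      EReal.coe_sub_le_coe_iff]
  rw [hset]
  refine isClosed_iInter fun z => ?_
  induction hz : φ z using EReal.rec with
  | bot => simp only [le_bot_iff, EReal.coe_ne_bot, ofPred_false, isClosed_empty]
  | coe m =>
    simp only [EReal.coe_le_coe_iff]
    exact isClosed_le (by fun_prop) continuous_const
  | top => simp

lemma dm_conjF_subset_dm_conjF {g₁ g₂ : En n → EReal} (h : ∀ x, g₁ x ≤ g₂ x) :
    dm (conjF g₁) ⊆ dm (conjF g₂) :=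
  fun z hz => (conjF_anti h z).trans_lt hz

lemma convex_dm_conjF (g : En n → EReal) : Convex ℝ (dm (conjF g)) := by
  intro z₁ (h₁ : conjF g z₁ < ⊤) z₂ (h₂ : conjF g z₂ < ⊤) a b ha hb hab
  set r₁ := (conjF g z₁).toReal
  set r₂ := (conjF g z₂).toReal
  have hbound : conjF g (a • z₁ + b • z₂) ≤ ((a * r₁ + b * r₂ : ℝ) : EReal) := by
    refine iSup_le fun x => ?_
    have e₁ : ((⟪z₁, x⟫ - r₁ : ℝ) : EReal) ≤ g x := (EReal.coe_sub_le_coe_iff _ _ _).1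
      ((inner_sub_le_conjF g z₁ x).trans (EReal.le_coe_toReal h₁.ne))
    have e₂ : ((⟪z₂, x⟫ - r₂ : ℝ) : EReal) ≤ g x := (EReal.coe_sub_le_coe_iff _ _ _).1
      ((inner_sub_le_conjF g z₂ x).trans (EReal.le_coe_toReal h₂.ne))
    have hcomb : ⟪a • z₁ + b • z₂, x⟫ - (a * r₁ + b * r₂) =
        a * (⟪z₁, x⟫ - r₁) + b * (⟪z₂, x⟫ - r₂) := by
      rw [inner_add_left, real_inner_smul_left, real_inner_smul_left]
      ring
    rw [EReal.coe_sub_le_coe_iff, hcomb]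
    exact (EReal.coe_le_coe_iff.2 (Convex.combo_le_max _ _ ha hb hab)).trans
      (by rw [EReal.coe_strictMono.monotone.map_max]; exact max_le e₁ e₂)
  exact hbound.trans_lt (EReal.coe_lt_top _)

end Conjugate

section Recession

variable {n : ℕ}

lemma conjF_add_smul_le (φ : En n → EReal) {d : En n} {c : ℝ} (hd : ∀ u ∈ dm φ, ⟪d, u⟫ ≤ c)
    (x : En n) {s : ℝ} (hs : 0 ≤ s) :
    conjF φ (x + s • d) ≤ conjF φ x + ((s * c : ℝ) : EReal) := by
  refine iSup_le fun u => ?_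
  by_cases hu : φ u = ⊤
  · simp [hu, EReal.sub_top]
  have hinner : ⟪x + s • d, u⟫ ≤ ⟪x, u⟫ + s * c := by
    rw [inner_add_left, real_inner_smul_left]
    gcongr
    exact hd u (lt_top_iff_ne_top.2 hu)
  calc (⟪x + s • d, u⟫ : EReal) - φ u ≤ ((⟪x, u⟫ + s * c : ℝ) : EReal) - φ u :=
        EReal.sub_le_sub (EReal.coe_le_coe_iff.2 hinner) le_rfl
    _ = ((⟪x, u⟫ : EReal) - φ u) + ((s * c : ℝ) : EReal) := EReal.coe_add_sub _ _ _
    _ ≤ conjF φ x + ((s * c : ℝ) : EReal) := by gcongr; exact inner_sub_le_conjF φ x u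

lemma conjF_eq_top_of_notMem_closure {ψ : En n → EReal} {U : Set (En n)} (hU : Convex ℝ U)
    {x₀ : En n} {A : ℝ}
    (hψ : ∀ d c, (∀ u ∈ U, ⟪d, u⟫ ≤ c) → ∀ s : ℝ, 0 ≤ s →
      ψ (x₀ + s • d) ≤ ((A + s * c : ℝ) : EReal))
    {v : En n} (hv : v ∉ closure U) : conjF ψ v = ⊤ := by
  obtain ⟨L, c, hLU, hLv⟩ := geometric_hahn_banach_closed_point hU.closure isClosed_closure hv
  set d := (InnerProductSpace.toDual ℝ (En n)).symm L
  have hd : ∀ w, ⟪d, w⟫ = L w := fun w => InnerProductSpace.toDual_symm_apply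
  have hdU : ∀ u ∈ U, ⟪d, u⟫ ≤ c := fun u hu => (hd u ▸ hLU u (subset_closure hu)).le
  have hgrowth : Tendsto (fun s : ℝ => ⟪v, x₀⟫ - A + s * (L v - c)) atTop atTop :=
    tendsto_atTop_add_const_left _ _ (tendsto_id.atTop_mul_const (sub_pos.2 hLv))
  rw [EReal.eq_top_iff_forall_lt]
  intro M
  obtain ⟨s, hs, hsM⟩ := ((eventually_ge_atTop 0).and (hgrowth.eventually_gt_atTop M)).exists
  calc (M : EReal) < ((⟪v, x₀⟫ - A + s * (L v - c) : ℝ) : EReal) := EReal.coe_lt_coe_iff.2 hsM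
    _ ≤ (⟪v, x₀ + s • d⟫ : EReal) - ψ (x₀ + s • d) := by
        rw [EReal.coe_le_coe_sub_iff]
        refine (hψ d c hdU s hs).trans_eq ?_
        rw [inner_add_right, real_inner_smul_right, real_inner_comm d v, hd]
        congr 1
        ring
    _ ≤ conjF ψ v := inner_sub_le_conjF ψ v _

lemma dm_conjF_subset_closure_iUnion {ι : Type*} {G : En n → EReal} {φ : ι → En n → EReal}
    (hG : ∀ x, conjF (conjF G) x = ⨆ i, conjF (φ i) x) (hconv : Convex ℝ (⋃ i, dm (φ i)))
    {x₀ : En n} (hx₀ : conjF (conjF G) x₀ ≠ ⊤) : dm (conjF G) ⊆ closure (⋃ i, dm (φ i)) := by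
  set A := (conjF (conjF G) x₀).toReal
  have hA : conjF (conjF G) x₀ ≤ (A : EReal) := EReal.le_coe_toReal hx₀
  intro v (hv : conjF G v < ⊤)
  by_contra hvU
  refine hv.ne ?_
  rw [← conjF_conjF_conjF]
  refine conjF_eq_top_of_notMem_closure (x₀ := x₀) (A := A) hconv (fun d c hdc s hs => ?_) hvU
  rw [hG]
  refine iSup_le fun i => ?_
  calc conjF (φ i) (x₀ + s • d) ≤ conjF (φ i) x₀ + ((s * c : ℝ) : EReal) :=
        conjF_add_smul_le (φ i) (fun u hu => hdc u (mem_iUnion_of_mem i hu)) x₀ hs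
    _ ≤ conjF (conjF G) x₀ + ((s * c : ℝ) : EReal) := by
        rw [hG]
        gcongr
        exact le_iSup (fun i => conjF (φ i) x₀) i
    _ ≤ ((A + s * c : ℝ) : EReal) := by
        rw [EReal.coe_add]
        gcongr

end Recession

theorem Convex.interior_closure_subset_interior {V : Type*} [NormedAddCommGroup V]
    [NormedSpace ℝ V] [FiniteDimensional ℝ V] {s : Set V} (hs : Convex ℝ s) :
    interior (closure s) ⊆ interior s := by
  intro y hy
  have hspan : affineSpan ℝ s = ⊤ := by
    refine top_le_iff.1 ?_
    rw [← hs.closure.interior_nonempty_iff_affineSpan_eq_top.1 ⟨y, hy⟩]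
    exact affineSpan_le.2 (closure_minimal (subset_affineSpan ℝ s)
      (affineSpan ℝ s).closed_of_finiteDimensional)
  rwa [← hs.interior_closure_eq_interior_of_nonempty_interior
    (hs.interior_nonempty_iff_affineSpan_eq_top.2 hspan)]

lemma EuclideanSpace.isBounded_of_abs_apply_le {ι : Type*} [Fintype ι]
    {S : Set (EuclideanSpace ℝ ι)} (C : ι → ℝ) (h : ∀ x ∈ S, ∀ i, |x i| ≤ C i) :
    Bornology.IsBounded S := by
  have hcoord : Bornology.IsBounded (WithLp.ofLp '' S) :=
    Bornology.forall_isBounded_image_eval_iff.1 fun i =>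
      (Metric.isBounded_Icc (-C i) (C i)).subset <| by
        rintro _ ⟨_, ⟨x, hx, rfl⟩, rfl⟩
        exact abs_le.1 (h x hx i)
  simpa [image_image] using (PiLp.lipschitzWith_toLp 2 _).isBounded_image hcoord

theorem nonempty_iInter_of_antitone_of_isCompact {X T : Type*} [TopologicalSpace X] [Preorder T]
    [IsDirected T (· ≤ ·)] {S : T → Set X} (hS : Antitone S) (hne : ∀ t, (S t).Nonempty)
    (hcl : ∀ t, IsClosed (S t)) {t₀ : T} (ht₀ : IsCompact (S t₀)) : (⋂ t, S t).Nonempty := by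
  classical
  have : Nonempty T := ⟨t₀⟩
  refine (ht₀.inter_iInter_nonempty S hcl fun u => ?_).mono inter_subset_right
  obtain ⟨t, ht⟩ := (insert t₀ u).exists_le
  exact (hne t).mono (subset_inter (hS (ht t₀ (Finset.mem_insert_self _ _)))
    (subset_iInter₂ fun i hi => hS (ht i (Finset.mem_insert_of_mem hi))))

section Family

variable {n : ℕ}

lemma exists_add_smul_single_mem_of_mem_interior_iUnion {T : Type*} [Preorder T]
    [IsDirected T (· ≤ ·)] {D : T → Set (En n)} (hD : Monotone D) {y : En n}
    (hy : y ∈ interior (⋃ t, D t)) :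
    ∃ t, ∃ δ : ℝ, 0 < δ ∧ ∀ i, y + δ • EuclideanSpace.single i (1 : ℝ) ∈ D t ∧
      y - δ • EuclideanSpace.single i (1 : ℝ) ∈ D t := by
  obtain ⟨ε, hε, hball⟩ := Metric.mem_nhds_iff.1 (mem_interior_iff_mem_nhds.1 hy)
  have hδ : ∀ i (σ : ℝ), |σ| = ε / 2 → y + σ • EuclideanSpace.single i (1 : ℝ) ∈ ⋃ t, D t :=
    fun i σ hσ => hball (by simp [dist_eq_norm, norm_smul, hσ, hε])
  choose tp htp using fun i => mem_iUnion.1 (hδ i (ε / 2) (abs_of_pos (half_pos hε)))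
  choose tm htm using fun i =>
    mem_iUnion.1 (hδ i (-(ε / 2)) (by rw [abs_neg, abs_of_pos (half_pos hε)]))
  obtain ⟨t₀, -⟩ := mem_iUnion.1 (interior_subset hy)
  have : Nonempty T := ⟨t₀⟩
  obtain ⟨a, ha⟩ := Finite.exists_le tp
  obtain ⟨b, hb⟩ := Finite.exists_le tm
  obtain ⟨t, hat, hbt⟩ := directed_of (· ≤ ·) a b
  refine ⟨t, ε / 2, half_pos hε, fun i => ⟨hD ((ha i).trans hat) (htp i), ?_⟩⟩
  simpa [sub_eq_add_neg] using hD ((hb i).trans hbt) (htm i)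

lemma isBounded_setOf_le_inner_sub {ψ : En n → EReal} {y : En n} {δ : ℝ} (hδ : 0 < δ)
    (hψ : ∀ i, conjF ψ (y + δ • EuclideanSpace.single i (1 : ℝ)) ≠ ⊤ ∧
      conjF ψ (y - δ • EuclideanSpace.single i (1 : ℝ)) ≠ ⊤) (β : ℝ) :
    Bornology.IsBounded {x | (β : EReal) ≤ (⟪y, x⟫ : EReal) - ψ x} := by
  set M : Fin n → ℝ := fun i => max (conjF ψ (y + δ • EuclideanSpace.single i (1 : ℝ))).toReal
    (conjF ψ (y - δ • EuclideanSpace.single i (1 : ℝ))).toReal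
  refine EuclideanSpace.isBounded_of_abs_apply_le (fun i => (M i - β) / δ) fun x hx i => ?_
  have hplus : δ * x i ≤ M i - β := by
    have h := EReal.sub_le_sub_of_le_sub_of_sub_le hx
      ((inner_sub_le_conjF ψ _ x).trans (EReal.le_coe_toReal (hψ i).1))
    simp only [inner_add_left, real_inner_smul_left, EuclideanSpace.inner_single_left] at h
    simp only [map_one, one_mul, add_sub_cancel_left] at h
    exact h.trans (by gcongr; exact le_max_left _ _)
  have hminus : -(δ * x i) ≤ M i - β := by
    have h := EReal.sub_le_sub_of_le_sub_of_sub_le hx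
      ((inner_sub_le_conjF ψ _ x).trans (EReal.le_coe_toReal (hψ i).2))
    simp only [inner_sub_left, real_inner_smul_left, EuclideanSpace.inner_single_left] at h
    simp only [map_one, one_mul, sub_sub_cancel_left] at h
    exact h.trans (by gcongr; exact le_max_right _ _)
  rw [le_div_iff₀ hδ, ← abs_of_pos hδ, ← abs_mul, mul_comm]
  exact abs_le'.2 ⟨hplus, hminus⟩

lemma exists_forall_le_inner_sub_conjF_conjF {T : Type*} [Preorder T] [IsDirected T (· ≤ ·)]
    {f : T → En n → EReal} (hf : Monotone f) {y : En n}
    (hy : y ∈ interior (⋃ t, dm (conjF (f t)))) {β : ℝ} (hβ : ∀ t, (β : EReal) < conjF (f t) y) :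
    ∃ x, ∀ t, (β : EReal) ≤ (⟪y, x⟫ : EReal) - conjF (conjF (f t)) x := by
  set S : T → Set (En n) := fun t => {x | (β : EReal) ≤ (⟪y, x⟫ : EReal) - conjF (conjF (f t)) x}
  have hanti : Antitone S := fun s t hst x hx =>
    hx.trans (EReal.sub_le_sub le_rfl (conjF_anti (conjF_anti (hf hst)) x))
  have hne : ∀ t, (S t).Nonempty := fun t => by
    have h := hβ t
    rw [← conjF_conjF_conjF, conjF, lt_iSup_iff] at h
    obtain ⟨x, hx⟩ := h
    exact ⟨x, hx.le⟩
  obtain ⟨t₀, δ, hδ, hcross⟩ := exists_add_smul_single_mem_of_mem_interior_iUnion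
    (fun s t hst => dm_conjF_subset_dm_conjF (hf hst)) hy
  have hbdd : Bornology.IsBounded (S t₀) := by
    refine isBounded_setOf_le_inner_sub hδ (fun i => ?_) β
    simp only [conjF_conjF_conjF]
    exact ⟨(hcross i).1.ne, (hcross i).2.ne⟩
  obtain ⟨x, hx⟩ := nonempty_iInter_of_antitone_of_isCompact hanti hne
    (fun t => isClosed_setOf_le_inner_sub_conjF (conjF (f t)) y β)
    (hbdd.isCompact_closure.of_isClosed_subset
      (isClosed_setOf_le_inner_sub_conjF (conjF (f t₀)) y β) subset_closure)
  exact ⟨x, mem_iInter.1 hx⟩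

lemma le_conjF_of_forall_le_inner_sub {ι : Type*} {G : En n → EReal} {g : ι → En n → EReal}
    (hG : ∀ x, conjF (conjF G) x = ⨆ i, g i x) {y x : En n} {β : ℝ}
    (hx : ∀ i, (β : EReal) ≤ (⟪y, x⟫ : EReal) - g i x) : (β : EReal) ≤ conjF G y := by
  have hGx : conjF (conjF G) x ≤ ((⟪y, x⟫ - β : ℝ) : EReal) := by
    rw [hG]
    exact iSup_le fun i => (EReal.coe_le_coe_sub_iff _ _ _).1 (hx i)
  calc (β : EReal) ≤ (⟪y, x⟫ : EReal) - conjF (conjF G) x :=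
        (EReal.coe_le_coe_sub_iff _ _ _).2 hGx
    _ ≤ conjF (conjF (conjF G)) y := inner_sub_le_conjF _ y x
    _ = conjF G y := conjF_conjF_conjF G y

end Family

theorem statement10_general {n : ℕ} {T : Type*} [Preorder T]
    (hdir : ∀ a b : T, ∃ c, a ≤ c ∧ b ≤ c)
    (f : T → En n → EReal)
    (hmono : ∀ ⦃s t : T⦄, s ≤ t → ∀ x, f s x ≤ f t x)
    (hp : ProperF (conjF (fun x => ⨆ t, f t x)))
    (hbi : ∀ x, conjF (conjF (fun x => ⨆ t, f t x)) x = ⨆ t, conjF (conjF (f t)) x)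
    (y : En n) (hy : y ∈ interior (dm (conjF (fun x => ⨆ t, f t x)))) :
    conjF (fun x => ⨆ t, f t x) y = ⨅ t, conjF (f t) y := by
  have : IsDirected T (· ≤ ·) := ⟨hdir⟩
  refine le_antisymm (le_iInf fun t => conjF_anti (fun x => le_iSup (f · x) t) y) ?_
  refine EReal.ge_of_forall_gt_iff_ge.1 fun β hβ => ?_
  have hdm : Monotone fun t => dm (conjF (f t)) := fun s t hst =>
    dm_conjF_subset_dm_conjF (hmono hst)
  have hconv : Convex ℝ (⋃ t, dm (conjF (f t))) :=
    hdm.directed_le.convex_iUnion fun t => convex_dm_conjF (f t)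
  obtain ⟨x₀, hx₀⟩ := exists_conjF_conjF_ne_top (hp.2 y).ne'
  have hyU : y ∈ interior (⋃ t, dm (conjF (f t))) := hconv.interior_closure_subset_interior
    (interior_mono (dm_conjF_subset_closure_iUnion hbi hconv hx₀) hy)
  obtain ⟨x, hx⟩ := exists_forall_le_inner_sub_conjF_conjF (fun s t hst => hmono hst) hyU
    fun t => hβ.trans_le (iInf_le _ t)
  exact le_conjF_of_forall_le_inner_sub hbi hx

/-- For an increasing family of epi-pointed functions over a directed
set, with `f*` proper and `f** = sup_t f_t**`, one has `f*(y) = inf_t f_t*(y)` for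
every `y ∈ int (dom f*)`. -/
theorem statement10 {n : ℕ} {T : Type*} [Preorder T]
    (hdir : ∀ a b : T, ∃ c, a ≤ c ∧ b ≤ c)
    (f : T → En n → EReal)
    (hmono : ∀ ⦃s t : T⦄, s ≤ t → ∀ x, f s x ≤ f t x)
    (hep : ∀ t, EpiPointed (f t))
    (hp : ProperF (conjF (fun x => ⨆ t, f t x)))
    (hbi : ∀ x, conjF (conjF (fun x => ⨆ t, f t x)) x = ⨆ t, conjF (conjF (f t)) x)
    (y : En n) (hy : y ∈ interior (dm (conjF (fun x => ⨆ t, f t x)))) :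
    conjF (fun x => ⨆ t, f t x) y = ⨅ t, conjF (f t) y :=
  statement10_general hdir f hmono hp hbi y hy
end
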